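/- In the quantum plane E = k⟨x,y⟩/(yx - q·xy) with q a primitive r-th root of unity, r odd, and char k ≠ 2, the graded centre of E equals k[x^{2r}, x^r y^r, y^{2r}], and in particular E is a finitely generated module over k[x^{2r}, y^{2r}]. -/
import Mathlib


noncomputable section

open FreeAlgebra

/-- The relation defining the quantum plane `E = k⟨x,y⟩/(yx - q·xy)`. -/
inductive QPRel (k : Type) [Field k] (q : k) :
    FreeAlgebra k (Fin 2) → FreeAlgebra k (Fin 2) → Prop
  | comm : QPRel k q (ι k 1 * ι k 0) (q • (ι k 0 * ι k 1))

/-- The quantum plane `E = k⟨x,y⟩/(yx - q·xy)`. -/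
abbrev QP (k : Type) [Field k] (q : k) := RingQuot (QPRel k q)

/-- The image of `x` in the quantum plane. -/
def qx (k : Type) [Field k] (q : k) : QP k q := RingQuot.mkAlgHom k (QPRel k q) (ι k 0)

/-- The image of `y` in the quantum plane. -/
def qy (k : Type) [Field k] (q : k) : QP k q := RingQuot.mkAlgHom k (QPRel k q) (ι k 1)

/-- The degree-`n` homogeneous component of the quantum plane, spanned by the
monomials `xᵃyᵇ` with `a + b = n` (with `x, y` in degree 1). -/
def QPdeg (k : Type) [Field k] (q : k) (n : ℕ) : Submodule k (QP k q) :=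
  Submodule.span k {z | ∃ a b : ℕ, a + b = n ∧ z = qx k q ^ a * qy k q ^ b}

/-- The graded centre of the quantum plane: the span of the homogeneous elements `z`
(say of degree `n`) such that `zγ = (-1)^{deg z · deg γ} γz` for all homogeneous `γ`. -/
def QPgradedCentre (k : Type) [Field k] (q : k) : Submodule k (QP k q) :=
  Submodule.span k {z | ∃ n : ℕ, z ∈ QPdeg k q n ∧
    ∀ (m : ℕ) (γ : QP k q), γ ∈ QPdeg k q m → z * γ = ((-1 : k) ^ (n * m)) • (γ * z)}

namespace QPaux

variable {k : Type} [Field k] {q : k}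

/-- monomial family -/
def M (k : Type) [Field k] (q : k) (p : ℕ × ℕ) : QP k q := qx k q ^ p.1 * qy k q ^ p.2

lemma yx : qy k q * qx k q = q • (qx k q * qy k q) := by
  have := RingQuot.mkAlgHom_rel k (QPRel.comm (k := k) (q := q))
  simpa [qx, qy, map_mul, map_smul] using this

lemma y_xpow (c : ℕ) : qy k q * qx k q ^ c = (q ^ c) • (qx k q ^ c * qy k q) := by
  induction c with
  | zero => simp
  | succ n ih =>
    rw [pow_succ, ← mul_assoc, ih, smul_mul_assoc, mul_assoc, yx, mul_smul_comm, smul_smul,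
      ← pow_succ, ← mul_assoc, ← pow_succ]

lemma ypow_xpow (b c : ℕ) :
    qy k q ^ b * qx k q ^ c = (q ^ (b * c)) • (qx k q ^ c * qy k q ^ b) := by
  induction b with
  | zero => simp
  | succ n ih =>
    rw [pow_succ, mul_assoc, y_xpow, mul_smul_comm, ← mul_assoc, ih, smul_mul_assoc,
      smul_smul, ← pow_add, mul_assoc, ← pow_succ]
    congr 1
    ring

lemma M_mul (p p' : ℕ × ℕ) :
    M k q p * M k q p' = (q ^ (p.2 * p'.1)) • M k q (p.1 + p'.1, p.2 + p'.2) := by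
  unfold M
  rw [mul_assoc, ← mul_assoc (qy k q ^ p.2), ypow_xpow, smul_mul_assoc, mul_smul_comm]
  congr 1
  simp [pow_add, mul_assoc]

/-! ### A faithful representation on `(ℕ × ℕ) →₀ k` -/

abbrev V (k : Type) [Field k] : Type := (ℕ × ℕ) →₀ k

def Xop (k : Type) [Field k] : V k →ₗ[k] V k :=
  Finsupp.lsum k fun p => Finsupp.lsingle (p.1 + 1, p.2)

def Yop (k : Type) [Field k] (q : k) : V k →ₗ[k] V k :=
  Finsupp.lsum k fun p => (q ^ p.1) • Finsupp.lsingle (p.1, p.2 + 1)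

@[simp] lemma Xop_single (p : ℕ × ℕ) (v : k) :
    Xop k (Finsupp.single p v) = Finsupp.single (p.1 + 1, p.2) v := by
  simp [Xop]

@[simp] lemma Yop_single (p : ℕ × ℕ) (v : k) :
    Yop k q (Finsupp.single p v) = q ^ p.1 • Finsupp.single (p.1, p.2 + 1) v := by
  simp [Yop]

lemma YX_rel : (Yop k q) ∘ₗ (Xop k) = q • ((Xop k) ∘ₗ (Yop k q)) := by
  apply Finsupp.lhom_ext
  intro p v
  rw [LinearMap.comp_apply, LinearMap.smul_apply, LinearMap.comp_apply, Xop_single,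
    Yop_single, Yop_single, map_smul, Xop_single, smul_smul]
  simp only []
  rw [pow_succ']

def rep (k : Type) [Field k] (q : k) : QP k q →ₐ[k] Module.End k (V k) :=
  RingQuot.liftAlgHom k ⟨FreeAlgebra.lift k ![Xop k, Yop k q], by
    rintro _ _ ⟨⟩
    rw [map_mul, map_smul, map_mul]
    simp only [FreeAlgebra.lift_ι_apply, Matrix.cons_val_one, Matrix.head_cons,
      Matrix.cons_val_zero]
    exact YX_rel⟩

lemma rep_qx : rep k q (qx k q) = Xop k := by
  unfold rep qx
  rw [RingQuot.liftAlgHom_mkAlgHom_apply]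
  simp

lemma rep_qy : rep k q (qy k q) = Yop k q := by
  unfold rep qy
  rw [RingQuot.liftAlgHom_mkAlgHom_apply]
  simp

def ev (k : Type) [Field k] (q : k) : QP k q →ₗ[k] V k :=
  (LinearMap.applyₗ (Finsupp.single ((0 : ℕ), (0 : ℕ)) (1 : k))).comp (rep k q).toLinearMap

lemma Ypow_apply (b : ℕ) : ∀ c : ℕ,
    (Yop k q ^ b) (Finsupp.single ((0 : ℕ), c) (1 : k)) = Finsupp.single (0, c + b) 1 := by
  induction b with
  | zero => intro c; simp
  | succ n ih =>
    intro c
    rw [pow_succ', Module.End.mul_apply, ih, Yop_single]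
    simp [add_assoc]

lemma Xpow_apply (a : ℕ) (p : ℕ × ℕ) :
    (Xop k ^ a) (Finsupp.single p (1 : k)) = Finsupp.single (p.1 + a, p.2) 1 := by
  induction a with
  | zero => simp
  | succ n ih =>
    rw [pow_succ', Module.End.mul_apply, ih, Xop_single]
    simp [add_assoc]

lemma ev_apply (z : QP k q) :
    ev k q z = rep k q z (Finsupp.single ((0 : ℕ), (0 : ℕ)) (1 : k)) := rfl

lemma ev_M (p : ℕ × ℕ) : ev k q (M k q p) = Finsupp.single p 1 := by
  rw [ev_apply]
  unfold M
  rw [map_mul, map_pow, map_pow, rep_qx, rep_qy, Module.End.mul_apply, Ypow_apply,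
    Xpow_apply]
  simp

lemma M_li : LinearIndependent k (M k q) := by
  apply LinearIndependent.of_comp (ev k q)
  have h : (⇑(ev k q) ∘ M k q) = fun p => Finsupp.single p (1 : k) := funext fun p => ev_M p
  rw [h]
  simpa using (Finsupp.basisSingleOne (R := k) (ι := ℕ × ℕ)).linearIndependent

/-! ### Spanning -/

lemma one_eq_M : (1 : QP k q) = M k q (0, 0) := by simp [M]

lemma qx_eq_M : qx k q = M k q (1, 0) := by simp [M]

lemma qy_eq_M : qy k q = M k q (0, 1) := by simp [M]

lemma span_M_mul {z w : QP k q} (hz : z ∈ Submodule.span k (Set.range (M k q)))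
    (hw : w ∈ Submodule.span k (Set.range (M k q))) :
    z * w ∈ Submodule.span k (Set.range (M k q)) := by
  induction hz using Submodule.span_induction with
  | mem a ha =>
    induction hw using Submodule.span_induction with
    | mem b hb =>
      obtain ⟨p, rfl⟩ := ha; obtain ⟨p', rfl⟩ := hb
      rw [M_mul]
      exact Submodule.smul_mem _ _ (Submodule.subset_span ⟨_, rfl⟩)
    | zero => rw [mul_zero]; exact zero_mem _
    | add u v _ _ hu hv => rw [mul_add]; exact add_mem hu hv
    | smul c u _ hu => rw [mul_smul_comm]; exact Submodule.smul_mem _ _ hu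
  | zero => rw [zero_mul]; exact zero_mem _
  | add u v _ _ hu hv => rw [add_mul]; exact add_mem hu hv
  | smul c u _ hu => rw [smul_mul_assoc]; exact Submodule.smul_mem _ _ hu

lemma mem_span_M (z : QP k q) : z ∈ Submodule.span k (Set.range (M k q)) := by
  obtain ⟨w, rfl⟩ := RingQuot.mkAlgHom_surjective k (QPRel k q) z
  induction w using FreeAlgebra.induction with
  | grade0 a =>
    rw [AlgHom.commutes, Algebra.algebraMap_eq_smul_one, one_eq_M]
    exact Submodule.smul_mem _ _ (Submodule.subset_span ⟨_, rfl⟩)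
  | grade1 i =>
    fin_cases i
    · exact Submodule.subset_span ⟨(1, 0), by simp [M, qx]⟩
    · exact Submodule.subset_span ⟨(0, 1), by simp [M, qy]⟩
  | mul a b ha hb => rw [map_mul]; exact span_M_mul ha hb
  | add a b ha hb => rw [map_add]; exact add_mem ha hb

lemma QPdeg_set_eq (n : ℕ) :
    {z | ∃ a b : ℕ, a + b = n ∧ z = qx k q ^ a * qy k q ^ b} =
      M k q '' {p : ℕ × ℕ | p.1 + p.2 = n} := by
  ext z
  constructor
  · rintro ⟨a, b, hab, rfl⟩; exact ⟨(a, b), hab, rfl⟩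
  · rintro ⟨p, hp, rfl⟩; exact ⟨p.1, p.2, hp, rfl⟩

lemma QPdeg_eq (n : ℕ) :
    QPdeg k q n = Submodule.span k (M k q '' {p : ℕ × ℕ | p.1 + p.2 = n}) := by
  unfold QPdeg; rw [QPdeg_set_eq]

lemma mem_QPdeg (p : ℕ × ℕ) : M k q p ∈ QPdeg k q (p.1 + p.2) := by
  rw [QPdeg_eq]; exact Submodule.subset_span ⟨p, rfl, rfl⟩

/-! ### Coefficient extraction -/

lemma eq_coeff_of_sum_eq {s : Finset (ℕ × ℕ)} {f g : ℕ × ℕ → k} {σ : ℕ × ℕ → ℕ × ℕ}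
    (hσ : Function.Injective σ)
    (h : ∑ p ∈ s, f p • M k q (σ p) = ∑ p ∈ s, g p • M k q (σ p)) :
    ∀ p ∈ s, f p = g p := by
  have hli := (M_li (k := k) (q := q)).comp σ hσ
  have h0 : ∑ p ∈ s, (f p - g p) • (M k q ∘ σ) p = 0 := by
    have e : ∑ p ∈ s, (f p - g p) • (M k q ∘ σ) p
        = ∑ p ∈ s, f p • M k q (σ p) - ∑ p ∈ s, g p • M k q (σ p) := by
      rw [← Finset.sum_sub_distrib]
      refine Finset.sum_congr rfl fun p _ => ?_
      show (f p - g p) • M k q (σ p) = _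
      module
    rw [e, h, sub_self]
  intro p hp
  exact sub_eq_zero.mp (linearIndependent_iff'.mp hli s (fun p => f p - g p) h0 p hp)

lemma σx_inj : Function.Injective (fun p : ℕ × ℕ => (p.1 + 1, p.2)) := by
  intro p p' h
  simp only [Prod.mk.injEq, add_left_inj] at h
  exact Prod.ext h.1 h.2

lemma σy_inj : Function.Injective (fun p : ℕ × ℕ => (p.1, p.2 + 1)) := by
  intro p p' h
  simp only [Prod.mk.injEq, add_left_inj] at h
  exact Prod.ext h.1 h.2

lemma sum_mul_qx (l : (ℕ × ℕ) →₀ k) :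
    (∑ p ∈ l.support, l p • M k q p) * qx k q
      = ∑ p ∈ l.support, (l p * q ^ p.2) • M k q (p.1 + 1, p.2) := by
  rw [Finset.sum_mul]
  refine Finset.sum_congr rfl fun p _ => ?_
  rw [smul_mul_assoc, qx_eq_M, M_mul, smul_smul]
  simp

lemma qx_mul_sum (l : (ℕ × ℕ) →₀ k) :
    qx k q * (∑ p ∈ l.support, l p • M k q p)
      = ∑ p ∈ l.support, l p • M k q (p.1 + 1, p.2) := by
  rw [Finset.mul_sum]
  refine Finset.sum_congr rfl fun p _ => ?_
  rw [mul_smul_comm, qx_eq_M, M_mul]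
  simp [add_comm]

lemma sum_mul_qy (l : (ℕ × ℕ) →₀ k) :
    (∑ p ∈ l.support, l p • M k q p) * qy k q
      = ∑ p ∈ l.support, l p • M k q (p.1, p.2 + 1) := by
  rw [Finset.sum_mul]
  refine Finset.sum_congr rfl fun p _ => ?_
  rw [smul_mul_assoc, qy_eq_M, M_mul]
  simp

lemma qy_mul_sum (l : (ℕ × ℕ) →₀ k) :
    qy k q * (∑ p ∈ l.support, l p • M k q p)
      = ∑ p ∈ l.support, (l p * q ^ p.1) • M k q (p.1, p.2 + 1) := by
  rw [Finset.mul_sum]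
  refine Finset.sum_congr rfl fun p _ => ?_
  rw [mul_smul_comm, qy_eq_M, M_mul, smul_smul]
  simp [add_comm, mul_comm]

lemma central_coeffs {n : ℕ} {z : QP k q} (hz : z ∈ QPdeg k q n)
    (hc : ∀ (m : ℕ) (γ : QP k q), γ ∈ QPdeg k q m →
      z * γ = ((-1 : k) ^ (n * m)) • (γ * z)) :
    ∃ l : (ℕ × ℕ) →₀ k,
      (∀ p ∈ l.support, p.1 + p.2 = n ∧ l p * q ^ p.2 = (-1 : k) ^ n * l p ∧
        l p = (-1 : k) ^ n * (l p * q ^ p.1)) ∧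
      z = ∑ p ∈ l.support, l p • M k q p := by
  rw [QPdeg_eq] at hz
  obtain ⟨l, hls, rfl⟩ := (Finsupp.mem_span_image_iff_linearCombination k).mp hz
  have zsum : (Finsupp.linearCombination k (M k q)) l = ∑ p ∈ l.support, l p • M k q p := by
    rw [Finsupp.linearCombination_apply, Finsupp.sum]
  refine ⟨l, fun p hp => ⟨hls hp, ?_, ?_⟩, zsum⟩
  · have hx := hc 1 (qx k q) (by rw [qx_eq_M]; exact mem_QPdeg (1, 0))
    rw [zsum, sum_mul_qx, qx_mul_sum, Finset.smul_sum] at hx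
    simp only [mul_one, smul_smul] at hx
    exact eq_coeff_of_sum_eq σx_inj hx p hp
  · have hy := hc 1 (qy k q) (by rw [qy_eq_M]; exact mem_QPdeg (0, 1))
    rw [zsum, sum_mul_qy, qy_mul_sum, Finset.smul_sum] at hy
    simp only [mul_one, smul_smul, ← mul_assoc] at hy
    exact eq_coeff_of_sum_eq σy_inj (by
      simpa only [mul_assoc] using hy) p hp

/-! ### Arithmetic consequences -/

lemma coeff_constraint {r n a b : ℕ} (hq : IsPrimitiveRoot q r) (hr : Odd r)
    (hchar : ringChar k ≠ 2) (hab : a + b = n)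
    (h1 : q ^ b = (-1 : k) ^ n) (h2 : (1 : k) = (-1 : k) ^ n * q ^ a) :
    ∃ i j : ℕ, a = r * i ∧ b = r * j ∧ Even (i + j) := by
  have hn1 : ((-1 : k) ^ n) * ((-1 : k) ^ n) = 1 := by
    rw [← mul_pow]; norm_num
  have ha : q ^ a = (-1 : k) ^ n := by
    calc q ^ a = ((-1 : k) ^ n * (-1 : k) ^ n) * q ^ a := by rw [hn1, one_mul]
    _ = (-1 : k) ^ n * ((-1 : k) ^ n * q ^ a) := by ring
    _ = (-1 : k) ^ n := by rw [← h2, mul_one]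
  rcases Nat.even_or_odd n with hn | hn
  · have h1' : q ^ b = 1 := by rw [h1, hn.neg_one_pow]
    have ha' : q ^ a = 1 := by rw [ha, hn.neg_one_pow]
    obtain ⟨i, hi⟩ := (hq.pow_eq_one_iff_dvd a).mp ha'
    obtain ⟨j, hj⟩ := (hq.pow_eq_one_iff_dvd b).mp h1'
    refine ⟨i, j, hi, hj, ?_⟩
    have he : Even (r * (i + j)) := by
      rw [Nat.mul_add, ← hi, ← hj, hab]; exact hn
    rcases Nat.even_mul.mp he with h | h
    · exact absurd h (Nat.not_even_iff_odd.mpr hr)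
    · exact h
  · exfalso
    have ha2 : q ^ a = -1 := by rw [ha, hn.neg_one_pow]
    have h2a : q ^ (2 * a) = 1 := by rw [two_mul, pow_add, ha2]; ring
    have hra : r ∣ a :=
      (hr.coprime_two_left.symm).dvd_of_dvd_mul_left ((hq.pow_eq_one_iff_dvd _).mp h2a)
    have : q ^ a = 1 := (hq.pow_eq_one_iff_dvd a).mpr hra
    rw [this] at ha2
    exact Ring.neg_one_ne_one_of_char_ne_two hchar ha2.symm

lemma M_mem_adjoin {r i j : ℕ} (hij : Even (i + j)) :
    M k q (r * i, r * j) ∈ Algebra.adjoin k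
      {qx k q ^ (2 * r), qx k q ^ r * qy k q ^ r, qy k q ^ (2 * r)} := by
  have hx2 : qx k q ^ (2 * r) ∈ Algebra.adjoin k
      {qx k q ^ (2 * r), qx k q ^ r * qy k q ^ r, qy k q ^ (2 * r)} :=
    Algebra.subset_adjoin (by simp)
  have hxy : qx k q ^ r * qy k q ^ r ∈ Algebra.adjoin k
      {qx k q ^ (2 * r), qx k q ^ r * qy k q ^ r, qy k q ^ (2 * r)} :=
    Algebra.subset_adjoin (by simp)
  have hy2 : qy k q ^ (2 * r) ∈ Algebra.adjoin k
      {qx k q ^ (2 * r), qx k q ^ r * qy k q ^ r, qy k q ^ (2 * r)} :=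
    Algebra.subset_adjoin (by simp)
  rcases Nat.even_or_odd i with hi | hi
  · have hj : Even j := (Nat.even_add.mp hij).mp hi
    obtain ⟨s, hs⟩ := hi
    obtain ⟨t, ht⟩ := hj
    have e : M k q (r * i, r * j) = (qx k q ^ (2 * r)) ^ s * (qy k q ^ (2 * r)) ^ t := by
      subst hs ht
      unfold M
      rw [← pow_mul, ← pow_mul]
      congr 2 <;> ring
    rw [e]
    exact mul_mem (pow_mem hx2 s) (pow_mem hy2 t)
  · have hj : Odd j := by
      rw [Nat.odd_iff] at hi ⊢; rw [Nat.even_iff] at hij; omega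
    obtain ⟨s, hs⟩ := hi
    obtain ⟨t, ht⟩ := hj
    have e : M k q (r * i, r * j) =
        ((qx k q ^ (2 * r)) ^ s * (qx k q ^ r * qy k q ^ r)) * (qy k q ^ (2 * r)) ^ t := by
      unfold M
      rw [← pow_mul, ← pow_mul,
        show r * i = 2 * r * s + r from by subst hs; ring,
        show r * j = r + 2 * r * t from by subst ht; ring, pow_add, pow_add]
      simp only [mul_assoc]
    rw [e]
    exact mul_mem (mul_mem (pow_mem hx2 s) hxy) (pow_mem hy2 t)

/-! ### Centre ≤ adjoin -/

lemma centre_le_adjoin {r : ℕ} (hq : IsPrimitiveRoot q r) (hr : Odd r)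
    (hchar : ringChar k ≠ 2) :
    QPgradedCentre k q ≤ Subalgebra.toSubmodule (Algebra.adjoin k
      {qx k q ^ (2 * r), qx k q ^ r * qy k q ^ r, qy k q ^ (2 * r)}) := by
  unfold QPgradedCentre
  rw [Submodule.span_le]
  rintro z ⟨n, hz, hc⟩
  obtain ⟨l, hl, rfl⟩ := central_coeffs hz hc
  refine Submodule.sum_mem _ fun p hp => Submodule.smul_mem _ _ ?_
  obtain ⟨habn, h1, h2⟩ := hl p hp
  have hlp : l p ≠ 0 := Finsupp.mem_support_iff.mp hp
  have e1 : q ^ p.2 = (-1 : k) ^ n := by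
    refine mul_left_cancel₀ hlp ?_
    rw [h1]; ring
  have e2 : (1 : k) = (-1 : k) ^ n * q ^ p.1 := by
    refine mul_left_cancel₀ hlp ?_
    rw [mul_one]
    conv_lhs => rw [h2]
    ring
  obtain ⟨i, j, hi, hj, hij⟩ := coeff_constraint hq hr hchar habn e1 e2
  have : p = (r * i, r * j) := Prod.ext hi hj
  rw [this]
  exact M_mem_adjoin hij

/-! ### Adjoin ≤ centre -/

lemma prod_form {r : ℕ} {z : QP k q}
    (hz : z ∈ Submonoid.closure
      {qx k q ^ (2 * r), qx k q ^ r * qy k q ^ r, qy k q ^ (2 * r)}) :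
    ∃ (c : k) (i j : ℕ), Even (i + j) ∧ z = c • M k q (r * i, r * j) := by
  induction hz using Submonoid.closure_induction with
  | mem a ha =>
    simp only [Set.mem_insert_iff, Set.mem_singleton_iff] at ha
    rcases ha with rfl | rfl | rfl
    · exact ⟨1, 2, 0, by norm_num, by simp [M, Nat.mul_comm r 2]⟩
    · exact ⟨1, 1, 1, by norm_num, by simp [M]⟩
    · exact ⟨1, 0, 2, by norm_num, by simp [M, Nat.mul_comm r 2]⟩
  | one => exact ⟨1, 0, 0, by norm_num, by simp [M]⟩
  | mul a b _ _ ha hb =>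
    obtain ⟨c, i, j, hij, rfl⟩ := ha
    obtain ⟨c', i', j', hij', rfl⟩ := hb
    refine ⟨c * c' * q ^ (r * j * (r * i')), i + i', j + j', ?_, ?_⟩
    · have : i + i' + (j + j') = (i + j) + (i' + j') := by omega
      rw [this]; exact hij.add hij'
    · rw [smul_mul_assoc, mul_smul_comm, M_mul, smul_smul, smul_smul]
      rw [show (r * i + r * i', r * j + r * j') = (r * (i + i'), r * (j + j')) from by
        rw [Prod.mk.injEq]; exact ⟨by ring, by ring⟩]

lemma prod_central {r : ℕ} (hq : IsPrimitiveRoot q r) {c : k} {i j : ℕ}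
    (hij : Even (i + j)) :
    (c • M k q (r * i, r * j)) ∈ QPgradedCentre k q := by
  apply Submodule.subset_span
  refine ⟨r * i + r * j, Submodule.smul_mem _ _ (mem_QPdeg (r * i, r * j)), ?_⟩
  intro m γ hγ
  have hsign : ((-1 : k) ^ ((r * i + r * j) * m)) = 1 := by
    have he : Even ((r * i + r * j) * m) := by
      refine Even.mul_right ?_ m
      rw [show r * i + r * j = r * (i + j) from by ring]
      exact hij.mul_left r
    exact he.neg_one_pow
  rw [hsign, one_smul, smul_mul_assoc, mul_smul_comm]
  congr 1
  rw [QPdeg_eq] at hγ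
  induction hγ using Submodule.span_induction with
  | mem γ hγ =>
    obtain ⟨p, hp, rfl⟩ := hγ
    rw [M_mul, M_mul]
    have hq1 : q ^ ((r * i, r * j).2 * p.1) = 1 := by
      rw [show (r * i, r * j).2 * p.1 = r * (j * p.1) from by ring, pow_mul,
        hq.pow_eq_one, one_pow]
    have hq2 : q ^ (p.2 * (r * i, r * j).1) = 1 := by
      rw [show p.2 * (r * i, r * j).1 = r * (p.2 * i) from by ring, pow_mul,
        hq.pow_eq_one, one_pow]
    rw [hq1, hq2, one_smul, one_smul]
    rw [show ((r * i, r * j).1 + p.1, (r * i, r * j).2 + p.2)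
        = (p.1 + (r * i, r * j).1, p.2 + (r * i, r * j).2) from by
      rw [Prod.mk.injEq]; omega]
  | zero => rw [mul_zero, zero_mul]
  | add u v _ _ hu hv => rw [mul_add, add_mul, hu, hv]
  | smul a u _ hu => rw [mul_smul_comm, smul_mul_assoc, hu]

lemma adjoin_le_centre {r : ℕ} (hq : IsPrimitiveRoot q r) :
    Subalgebra.toSubmodule (Algebra.adjoin k
      {qx k q ^ (2 * r), qx k q ^ r * qy k q ^ r, qy k q ^ (2 * r)})
      ≤ QPgradedCentre k q := by
  rw [Algebra.adjoin_eq_span, Submodule.span_le]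
  intro z hz
  obtain ⟨c, i, j, hij, rfl⟩ := prod_form hz
  exact prod_central hq hij

/-! ### Finiteness -/

lemma finite_over {r : ℕ} (hq : IsPrimitiveRoot q r) (hrpos : 0 < r) :
    Module.Finite (Algebra.adjoin k {qx k q ^ (2 * r), qy k q ^ (2 * r)}) (QP k q) := by
  have h2r : 0 < 2 * r := by omega
  refine ⟨Submodule.fg_def.mpr ⟨M k q '' (Set.Iio (2 * r) ×ˢ Set.Iio (2 * r)), ?_, ?_⟩⟩
  · exact Set.Finite.image _ ((Set.finite_Iio _).prod (Set.finite_Iio _))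
  · rw [eq_top_iff]
    intro z _
    have h1 : z ∈ Submodule.span k (Set.range (M k q)) := mem_span_M z
    have h2 : Submodule.span k (Set.range (M k q)) ≤
        Submodule.restrictScalars k (Submodule.span
          (Algebra.adjoin k {qx k q ^ (2 * r), qy k q ^ (2 * r)})
          (M k q '' (Set.Iio (2 * r) ×ˢ Set.Iio (2 * r)))) := by
      rw [Submodule.span_le]
      rintro _ ⟨p, rfl⟩
      obtain ⟨a, b⟩ := p
      show M k q (a, b) ∈ _
      set s := a / (2 * r) with hs
      set a' := a % (2 * r) with ha'
      set t := b / (2 * r) with ht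
      set b' := b % (2 * r) with hb'
      have hmem : M k q (2 * r * s, 2 * r * t) ∈
          Algebra.adjoin k {qx k q ^ (2 * r), qy k q ^ (2 * r)} := by
        have e : M k q (2 * r * s, 2 * r * t)
            = (qx k q ^ (2 * r)) ^ s * (qy k q ^ (2 * r)) ^ t := by
          unfold M; rw [← pow_mul, ← pow_mul]
        rw [e]
        exact mul_mem (pow_mem (Algebra.subset_adjoin (by simp)) s)
          (pow_mem (Algebra.subset_adjoin (by simp)) t)
      have key : M k q (a, b) =
          (⟨M k q (2 * r * s, 2 * r * t), hmem⟩ :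
            Algebra.adjoin k {qx k q ^ (2 * r), qy k q ^ (2 * r)}) • M k q (a', b') := by
        rw [Subalgebra.smul_def]
        show M k q (a, b) = M k q (2 * r * s, 2 * r * t) * M k q (a', b')
        rw [M_mul]
        have hq1 : q ^ ((2 * r * s, 2 * r * t).2 * (a', b').1) = 1 := by
          rw [show (2 * r * s, 2 * r * t).2 * (a', b').1 = r * (2 * t * a') from by ring,
            pow_mul, hq.pow_eq_one, one_pow]
        rw [hq1, one_smul]
        congr 1
        rw [Prod.mk.injEq]
        constructor
        · show a = 2 * r * s + a'
          rw [hs, ha']; exact (Nat.div_add_mod a (2 * r)).symm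
        · show b = 2 * r * t + b'
          rw [ht, hb']; exact (Nat.div_add_mod b (2 * r)).symm
      rw [key]
      refine Submodule.smul_mem _ _ (Submodule.subset_span ?_)
      refine ⟨(a', b'), Set.mem_prod.mpr ⟨?_, ?_⟩, rfl⟩
      · exact Set.mem_Iio.mpr (Nat.mod_lt _ h2r)
      · exact Set.mem_Iio.mpr (Nat.mod_lt _ h2r)
    exact h2 h1

end QPaux

/-- If `char k ≠ 2` and `q` is a primitive `r`-th root of unity with `r` odd, the graded
centre of the quantum plane equals `k[x^{2r}, xʳyʳ, y^{2r}]`; in particular the quantum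
plane is a finitely generated module over `k[x^{2r}, y^{2r}]`. -/
theorem qp_gradedCentre_odd (k : Type) [Field k] (q : k) (r : ℕ)
    (hq : IsPrimitiveRoot q r) (hr : Odd r) (hchar : ringChar k ≠ 2) :
    QPgradedCentre k q =
      Subalgebra.toSubmodule (Algebra.adjoin k
        {qx k q ^ (2 * r), qx k q ^ r * qy k q ^ r, qy k q ^ (2 * r)}) ∧
    Module.Finite (Algebra.adjoin k {qx k q ^ (2 * r), qy k q ^ (2 * r)}) (QP k q) := by
  constructor
  · exact le_antisymm (QPaux.centre_le_adjoin hq hr hchar) (QPaux.adjoin_le_centre hq)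
  · exact QPaux.finite_over hq (by rcases hr with ⟨t, ht⟩; omega)
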